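/- arXiv:2605.12219 — 3 statements merged into one kernel-verified Lean document; each statement's English description precedes it below -/
import Mathlib

section
/- For the function c₂(x) = 1/(x²+1) − sin(e^{x²})/(x²+1)², the three sets {x : c₂'(x) > 0}, {x : c₂'(x) < 0}, and {x : c₂'(x) = 0} are all unbounded subsets of ℝ. -/
/-!
Along the points `x_k = √(log (kπ))` one has `sin (e^{x²}) = 0` and `cos (e^{x²}) = (-1)^k`, so
there `c₂'(x_k) = -2 x_k (1 + (-1)^k kπ) / (x_k² + 1)²`: positive for odd `k`, negative for even
`k`. Since `x_k → ∞`, `c₂'` changes sign at arbitrarily large `x`, and by continuity it vanishes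
at arbitrarily large `x` as well.
-/

open Real Filter

theorem not_isBounded_of_frequently_atTop {α : Type*} [Preorder α] [NoMaxOrder α] [Bornology α]
    [IsOrderBornology α] {s : Set α} (h : ∃ᶠ x in atTop, x ∈ s) : ¬ Bornology.IsBounded s := by
  intro hs
  obtain ⟨R, hR⟩ := hs.bddAbove
  obtain ⟨x, hxs, hRx⟩ := (h.and_eventually (eventually_gt_atTop R)).exists
  exact (hR hxs).not_gt hRx

theorem Continuous.frequently_atTop_eq_of_frequently_lt_of_frequently_gt {α δ : Type*}
    [ConditionallyCompleteLinearOrder α] [DenselyOrdered α] [TopologicalSpace α] [OrderTopology α]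
    [LinearOrder δ] [TopologicalSpace δ] [OrderClosedTopology δ] {f : α → δ} {y : δ}
    (hf : Continuous f) (hlt : ∃ᶠ x in atTop, y < f x) (hgt : ∃ᶠ x in atTop, f x < y) :
    ∃ᶠ x in atTop, f x = y := by
  rw [frequently_atTop] at *
  intro a
  obtain ⟨b, hab, hb⟩ := hlt a
  obtain ⟨c, hbc, hc⟩ := hgt b
  obtain ⟨x, hx, hfx⟩ := intermediate_value_Icc' hbc hf.continuousOn ⟨hc.le, hb.le⟩
  exact ⟨x, hab.trans hx.1, hfx⟩

noncomputable def c₂' (x : ℝ) : ℝ :=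
  (-(2 * x) * (1 + cos (exp (x ^ 2)) * exp (x ^ 2)) * (x ^ 2 + 1) + 4 * x * sin (exp (x ^ 2)))
    / (x ^ 2 + 1) ^ 3

theorem hasDerivAt_c₂ (x : ℝ) :
    HasDerivAt (fun x => 1 / (x ^ 2 + 1) - sin (exp (x ^ 2)) / (x ^ 2 + 1) ^ 2) (c₂' x) x := by
  have hq : HasDerivAt (fun x : ℝ => x ^ 2 + 1) (2 * x) x := by
    simpa using (hasDerivAt_pow 2 x).add_const 1
  have hexp : HasDerivAt (fun x : ℝ => exp (x ^ 2)) (exp (x ^ 2) * (2 * x)) x := by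
    simpa using (hasDerivAt_pow 2 x).exp
  have hq2 : HasDerivAt (fun x : ℝ => (x ^ 2 + 1) ^ 2) (2 * (x ^ 2 + 1) * (2 * x)) x := by
    simpa using hq.fun_pow 2
  refine (((hasDerivAt_const x 1).fun_div hq (by positivity)).fun_sub
    (hexp.sin.fun_div hq2 (by positivity))).congr_deriv ?_
  rw [c₂']
  field_simp
  ring

theorem continuous_c₂' : Continuous c₂' :=
  .div (by fun_prop) (by fun_prop) fun x => by positivity

theorem c₂'_of_exp_sq_eq_natCast_mul_pi {x : ℝ} {k : ℕ} (h : exp (x ^ 2) = k * π) :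
    c₂' x = -(2 * x) * (1 + (-1) ^ k * (k * π)) / (x ^ 2 + 1) ^ 2 := by
  have hq : x ^ 2 + 1 ≠ 0 := by positivity
  rw [c₂', h, sin_nat_mul_pi, cos_nat_mul_pi]
  field_simp
  ring

theorem exp_sq_sqrt_log {y : ℝ} (hy : 1 ≤ y) : exp (√(log y) ^ 2) = y := by
  rw [sq_sqrt (log_nonneg hy), exp_log (by linarith)]

theorem tendsto_sqrt_log_natCast_mul_pi : Tendsto (fun k : ℕ => √(log (k * π))) atTop atTop :=
  tendsto_sqrt_atTop.comp <| tendsto_log_atTop.comp <|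
    tendsto_natCast_atTop_atTop.atTop_mul_const pi_pos

theorem one_lt_natCast_mul_pi {k : ℕ} (hk : 1 ≤ k) : 1 < (k : ℝ) * π := by
  nlinarith [pi_gt_three, (Nat.one_le_cast (α := ℝ)).2 hk]

theorem frequently_c₂'_pos : ∃ᶠ x in atTop, 0 < c₂' x := by
  refine tendsto_sqrt_log_natCast_mul_pi.frequently <|
    (Nat.frequently_odd.and_eventually (eventually_ge_atTop 1)).mono ?_
  rintro k ⟨hodd, hk⟩
  have hkπ := one_lt_natCast_mul_pi hk
  have hx : 0 < √(log (k * π)) := sqrt_pos.2 (log_pos hkπ)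
  rw [c₂'_of_exp_sq_eq_natCast_mul_pi (exp_sq_sqrt_log hkπ.le), hodd.neg_one_pow]
  have : 0 < 2 * √(log (k * π)) * (k * π - 1) := by positivity
  exact div_pos (by linarith) (by positivity)

theorem frequently_c₂'_neg : ∃ᶠ x in atTop, c₂' x < 0 := by
  refine tendsto_sqrt_log_natCast_mul_pi.frequently <|
    (Nat.frequently_even.and_eventually (eventually_ge_atTop 1)).mono ?_
  rintro k ⟨heven, hk⟩
  have hkπ := one_lt_natCast_mul_pi hk
  have hx : 0 < √(log (k * π)) := sqrt_pos.2 (log_pos hkπ)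
  rw [c₂'_of_exp_sq_eq_natCast_mul_pi (exp_sq_sqrt_log hkπ.le), heven.neg_one_pow]
  have : 0 < 2 * √(log (k * π)) * (1 + k * π) := by positivity
  exact div_neg_of_neg_of_pos (by linarith) (by positivity)

theorem stmt_4 (c₂ : ℝ → ℝ)
    (hc₂ : c₂ = fun x => 1 / (x ^ 2 + 1) - sin (exp (x ^ 2)) / (x ^ 2 + 1) ^ 2) :
    ¬ Bornology.IsBounded {x : ℝ | deriv c₂ x > 0} ∧
    ¬ Bornology.IsBounded {x : ℝ | deriv c₂ x < 0} ∧
    ¬ Bornology.IsBounded {x : ℝ | deriv c₂ x = 0} := by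
  have hderiv : deriv c₂ = c₂' := funext fun x => hc₂ ▸ (hasDerivAt_c₂ x).deriv
  simp only [hderiv]
  have hzero := continuous_c₂'.frequently_atTop_eq_of_frequently_lt_of_frequently_gt
    frequently_c₂'_pos frequently_c₂'_neg
  exact ⟨not_isBounded_of_frequently_atTop frequently_c₂'_pos,
    not_isBounded_of_frequently_atTop frequently_c₂'_neg, not_isBounded_of_frequently_atTop hzero⟩
end

section
/- Let c₁, c₂ : ℝ → ℝ be continuous with c₁ < c₂ pointwise, m > 1, and X = {(x₁,x₂,y) ∈ ℝ² × ℝ^{m-1} : (x₁-c₁(x₂))(c₂(x₂)-x₁) = Σⱼ yⱼ²}. Then X is a closed, connected, non-compact subset of ℝ^{m+1}. -/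
/-!
Completing the square, `(x₁ - c₁) (c₂ - x₁) = r² - (x₁ - c)²` with `c` the midpoint and `r > 0`
the half-width of `[c₁ x₂, c₂ x₂]`, so `X` is a family of round `(m - 1)`-spheres of radius
`r x₂` parametrised continuously by the line of `x₂`. Hence `X` is a continuous image of
`ℝ × S^(m-1)`, which is connected as `m ≥ 2`, and `X` projects onto the whole `x₂`-line, so it is
not compact.
-/

lemma EuclideanSpace.mem_sphere_zero_one_iff {k : ℕ} (v : EuclideanSpace ℝ (Fin (k + 1))) :
    v ∈ Metric.sphere 0 1 ↔ v 0 ^ 2 + ∑ j : Fin k, v j.succ ^ 2 = 1 := by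
  rw [mem_sphere_zero_iff_norm, ← Fin.sum_univ_succ (f := fun i => v i ^ 2),
    ← EuclideanSpace.real_norm_sq_eq, pow_eq_one_iff_of_nonneg (norm_nonneg v) two_ne_zero]

def sphereTube (a ρ : ℝ → ℝ) (k : ℕ) : Set (ℝ × ℝ × (Fin k → ℝ)) :=
  {p | (p.1 - a p.2.1) ^ 2 + ∑ j, p.2.2 j ^ 2 = ρ p.2.1 ^ 2}

def sphereTubeParam (a ρ : ℝ → ℝ) (k : ℕ) (q : ℝ × EuclideanSpace ℝ (Fin (k + 1))) :
    ℝ × ℝ × (Fin k → ℝ) :=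
  (a q.1 + ρ q.1 * q.2 0, q.1, fun j => ρ q.1 * q.2 j.succ)

section

variable {a ρ : ℝ → ℝ} {k : ℕ}

lemma isClosed_sphereTube (ha : Continuous a) (hρ : Continuous ρ) :
    IsClosed (sphereTube a ρ k) :=
  isClosed_eq (by fun_prop) (by fun_prop)

lemma not_isCompact_sphereTube : ¬ IsCompact (sphereTube a ρ k) := by
  intro hK
  have hproj : (fun p : ℝ × ℝ × (Fin k → ℝ) => p.2.1) '' sphereTube a ρ k = Set.univ :=
    Set.eq_univ_of_forall fun t => ⟨(a t + ρ t, t, 0), by simp [sphereTube], rfl⟩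
  exact noncompact_univ ℝ (hproj ▸ hK.image (by fun_prop))

lemma continuous_sphereTubeParam (ha : Continuous a) (hρ : Continuous ρ) :
    Continuous (sphereTubeParam a ρ k) := by
  unfold sphereTubeParam
  fun_prop

lemma image_sphereTubeParam (hρ : ∀ t, ρ t ≠ 0) :
    sphereTubeParam a ρ k '' (Set.univ ×ˢ Metric.sphere 0 1) = sphereTube a ρ k := by
  ext p
  constructor
  · rintro ⟨⟨t, v⟩, ⟨-, hv⟩, rfl⟩
    rw [EuclideanSpace.mem_sphere_zero_one_iff] at hv
    simp only [sphereTube, sphereTubeParam, Set.mem_ofPred_eq, mul_pow, ← Finset.mul_sum]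
    linear_combination ρ t ^ 2 * hv
  · intro hp
    obtain ⟨x, t, y⟩ := p
    refine ⟨(t, (ρ t)⁻¹ • WithLp.toLp 2 (Fin.cons (x - a t) y)), ⟨trivial, ?_⟩, ?_⟩
    · simp only [sphereTube, Set.mem_ofPred_eq] at hp
      simp only [EuclideanSpace.mem_sphere_zero_one_iff, PiLp.smul_apply, Fin.cons_zero,
        smul_eq_mul, mul_pow, inv_pow, Fin.cons_succ, ← Finset.mul_sum]
      field_simp [hρ t]
      linear_combination hp
    · simp [sphereTubeParam, hρ t]

lemma isConnected_sphereTube (ha : Continuous a) (hρc : Continuous ρ) (hρ : ∀ t, ρ t ≠ 0)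
    (hk : 0 < k) : IsConnected (sphereTube a ρ k) := by
  have hS : IsConnected (Metric.sphere (0 : EuclideanSpace ℝ (Fin (k + 1))) 1) := by
    refine isConnected_sphere ?_ 0 zero_le_one
    rw [← Module.finrank_eq_rank, finrank_euclideanSpace_fin]
    exact_mod_cast Nat.succ_lt_succ hk
  rw [← image_sphereTubeParam hρ]
  exact (isConnected_univ.prod hS).image _ (continuous_sphereTubeParam ha hρc).continuousOn

end

lemma setOf_sub_mul_sub_eq_sphereTube (c₁ c₂ : ℝ → ℝ) (k : ℕ) :
    {p : ℝ × ℝ × (Fin k → ℝ) | (p.1 - c₁ p.2.1) * (c₂ p.2.1 - p.1) = ∑ j, p.2.2 j ^ 2} =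
      sphereTube (fun t => (c₁ t + c₂ t) / 2) (fun t => (c₂ t - c₁ t) / 2) k := by
  ext p
  simp only [sphereTube, Set.mem_ofPred_eq]
  constructor <;> intro h <;> linarith

theorem stmt_11 (m : ℕ) (hm : 1 < m) (c₁ c₂ : ℝ → ℝ)
    (h₁ : Continuous c₁) (h₂ : Continuous c₂) (hlt : ∀ x, c₁ x < c₂ x)
    (X : Set (ℝ × ℝ × (Fin (m - 1) → ℝ)))
    (hX : X = {p | (p.1 - c₁ p.2.1) * (c₂ p.2.1 - p.1) = ∑ j, p.2.2 j ^ 2}) :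
    IsClosed X ∧ IsConnected X ∧ ¬ IsCompact X := by
  rw [hX, setOf_sub_mul_sub_eq_sphereTube]
  have hρ : ∀ t, (c₂ t - c₁ t) / 2 ≠ 0 := fun t => by linarith [hlt t]
  exact ⟨isClosed_sphereTube (by fun_prop) (by fun_prop),
    isConnected_sphereTube (by fun_prop) (by fun_prop) hρ (by omega), not_isCompact_sphereTube⟩
end

section
/- Let c₂(x) = 1/(x²+1) − sin(e^{x²})/(x²+1)². Then the set of critical points {x : c₂'(x) = 0} is not a closed discrete subset of ℝ in the following strong sense: c₂' has zeros x_n with x_n → +∞ and, moreover, the set of critical values c₂({x : c₂'(x) = 0}) has 0 as an accumulation point. -/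
/-!
The derivative is `2x/(x²+1)³ · (2 sin e^{x²} − (x²+1)(1 + e^{x²} cos e^{x²}))`. Where
`sin e^{x²} = 0` its sign is that of `−(1 + e^{x²} cos e^{x²})`, so it alternates along the
points `x = √(log (kπ))`, and by Darboux's theorem each gap contains a critical point. Since
`|c₂ x| ≤ 2/(x²+1)` and `c₂ x ≥ x²/(x²+1)² > 0` for `x ≠ 0`, the critical values at these points
are positive and tend to `0`.
-/

open Real Filter Set Topology

noncomputable def oscillatingBump (x : ℝ) : ℝ :=
  1 / (x ^ 2 + 1) - sin (exp (x ^ 2)) / (x ^ 2 + 1) ^ 2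

noncomputable def oscillatingBumpDeriv (x : ℝ) : ℝ :=
  2 * x / (x ^ 2 + 1) ^ 3 *
    (2 * sin (exp (x ^ 2)) - (x ^ 2 + 1) * (1 + exp (x ^ 2) * cos (exp (x ^ 2))))

lemma hasDerivAt_oscillatingBump (x : ℝ) :
    HasDerivAt oscillatingBump (oscillatingBumpDeriv x) x := by
  have hu : x ^ 2 + 1 ≠ 0 := by positivity
  have hsq : HasDerivAt (fun y : ℝ => y ^ 2) (2 * x) x := by simpa using hasDerivAt_pow 2 x
  have hu' : HasDerivAt (fun y : ℝ => y ^ 2 + 1) (2 * x) x := hsq.add_const 1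
  refine (((hasDerivAt_const x (1 : ℝ)).div hu' hu).sub
    (hsq.exp.sin.div (hu'.pow 2) (pow_ne_zero 2 hu))).congr_deriv ?_
  rw [oscillatingBumpDeriv, Pi.pow_apply]
  field_simp
  ring

lemma oscillatingBumpDeriv_sqrt_log {t : ℝ} (ht : 1 ≤ t) :
    oscillatingBumpDeriv √(log t) =
      2 * √(log t) / (log t + 1) ^ 3 * (2 * sin t - (log t + 1) * (1 + t * cos t)) := by
  have hL : 0 ≤ log t := log_nonneg ht
  simp only [oscillatingBumpDeriv, sq_sqrt hL, exp_log (by linarith : 0 < t)]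

lemma oscillatingBumpDeriv_sqrt_log_neg {t : ℝ} (ht : 1 < t) (hsin : sin t = 0)
    (hcos : cos t = 1) : oscillatingBumpDeriv √(log t) < 0 := by
  have hL : 0 < log t := log_pos ht
  rw [oscillatingBumpDeriv_sqrt_log ht.le, hsin, hcos]
  exact mul_neg_of_pos_of_neg (by positivity) (by nlinarith)

lemma oscillatingBumpDeriv_sqrt_log_pos {t : ℝ} (ht : 1 < t) (hsin : sin t = 0)
    (hcos : cos t = -1) : 0 < oscillatingBumpDeriv √(log t) := by
  have hL : 0 < log t := log_pos ht
  rw [oscillatingBumpDeriv_sqrt_log ht.le, hsin, hcos]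
  exact mul_pos (by positivity) (by nlinarith)

lemma exists_deriv_oscillatingBump_eq_zero_gt (n : ℕ) :
    ∃ x, √(log (2 * π * (n + 1))) < x ∧ deriv oscillatingBump x = 0 := by
  set t : ℝ := 2 * π * (n + 1)
  have ht : 1 < t := by
    have : (1 : ℝ) ≤ n + 1 := by linarith [(n.cast_nonneg : (0 : ℝ) ≤ n)]
    nlinarith [pi_gt_three]
  have hsin : sin t = 0 := by
    rw [show t = (2 * (n + 1) : ℕ) * π by push_cast [t]; ring]
    exact sin_nat_mul_pi _
  have hcos : cos t = 1 := by
    rw [show t = (n + 1 : ℕ) * (2 * π) by push_cast [t]; ring]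
    exact cos_nat_mul_two_pi _
  have hab : √(log t) ≤ √(log (t + π)) :=
    sqrt_le_sqrt (log_le_log (by linarith) (by linarith [pi_pos]))
  obtain ⟨x, hx, hx0⟩ := exists_hasDerivWithinAt_eq_of_gt_of_lt hab
    (fun x _ => (hasDerivAt_oscillatingBump x).hasDerivWithinAt)
    (oscillatingBumpDeriv_sqrt_log_neg ht hsin hcos)
    (oscillatingBumpDeriv_sqrt_log_pos (by linarith [pi_pos])
      (by rw [sin_add_pi, hsin, neg_zero]) (by rw [cos_add_pi, hcos]))
  exact ⟨x, hx.1, (hasDerivAt_oscillatingBump x).deriv.trans hx0⟩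

lemma oscillatingBump_pos {x : ℝ} (hx : x ≠ 0) : 0 < oscillatingBump x := by
  have hu : 0 < x ^ 2 + 1 := by positivity
  have hx2 : 0 < x ^ 2 := by positivity
  rw [oscillatingBump, div_sub_div _ _ hu.ne' (pow_pos hu 2).ne']
  exact div_pos (by nlinarith [sin_le_one (exp (x ^ 2))]) (by positivity)

lemma abs_oscillatingBump_le (x : ℝ) : |oscillatingBump x| ≤ 2 / (x ^ 2 + 1) := by
  have hu : 1 ≤ x ^ 2 + 1 := by nlinarith [sq_nonneg x]
  have hsin : |sin (exp (x ^ 2)) / (x ^ 2 + 1) ^ 2| ≤ 1 / (x ^ 2 + 1) := by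
    rw [abs_div, abs_of_pos (by positivity : (0 : ℝ) < (x ^ 2 + 1) ^ 2),
      div_le_div_iff₀ (by positivity) (by positivity)]
    nlinarith [abs_sin_le_one (exp (x ^ 2)), abs_nonneg (sin (exp (x ^ 2)))]
  calc |oscillatingBump x| ≤ |1 / (x ^ 2 + 1)| + |sin (exp (x ^ 2)) / (x ^ 2 + 1) ^ 2| :=
        abs_sub _ _
    _ ≤ 1 / (x ^ 2 + 1) + 1 / (x ^ 2 + 1) := by
        rw [abs_of_pos (by positivity)]; exact add_le_add_right hsin _
    _ = 2 / (x ^ 2 + 1) := by ring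

lemma tendsto_oscillatingBump_atTop : Tendsto oscillatingBump atTop (𝓝 0) :=
  squeeze_zero_norm abs_oscillatingBump_le <| tendsto_const_nhds.div_atTop <|
    tendsto_atTop_add_const_right _ 1 (tendsto_pow_atTop two_ne_zero)

theorem stmt_14 (c₂ : ℝ → ℝ)
    (hc₂ : c₂ = fun x => 1 / (x ^ 2 + 1) - sin (exp (x ^ 2)) / (x ^ 2 + 1) ^ 2) :
    (∃ x : ℕ → ℝ, (∀ n, deriv c₂ (x n) = 0) ∧ Tendsto x atTop atTop) ∧
    (0 : ℝ) ∈ closure ((c₂ '' {x | deriv c₂ x = 0}) \ {0}) := by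
  obtain rfl : c₂ = oscillatingBump := hc₂
  choose x hx_gt hx_crit using exists_deriv_oscillatingBump_eq_zero_gt
  have hx_top : Tendsto x atTop atTop :=
    tendsto_atTop_mono (fun n => (hx_gt n).le) <| tendsto_sqrt_atTop.comp <|
      tendsto_log_atTop.comp <| Tendsto.const_mul_atTop (by positivity) <|
        tendsto_natCast_atTop_atTop.atTop_add tendsto_const_nhds
  have hx_ne : ∀ n, x n ≠ 0 := fun n => ((sqrt_nonneg _).trans_lt (hx_gt n)).ne'
  refine ⟨⟨x, hx_crit, hx_top⟩, mem_closure_of_tendsto (tendsto_oscillatingBump_atTop.comp hx_top)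
    (Eventually.of_forall fun n => ⟨⟨x n, hx_crit n, rfl⟩, (oscillatingBump_pos (hx_ne n)).ne'⟩)⟩
end
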